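/- Let (12/·) denote the unique primitive Dirichlet character modulo 12 (the Kronecker symbol mod 12), and define the Dedekind eta function by η(τ) = (1/2) Σ_{n∈ℤ} (12/n) e^{2πiτ n²/24} for τ ∈ ℂ with Im τ > 0. Then for all τ in the upper half-plane: √(i/τ) · η(−1/τ) = η(τ), where √· is the principal branch of the square root. -/

import Mathlib

/-!
Split `n = 12 q + k` by residues: each class of the eta series is a Jacobi theta function
`θ(k τ, 12 τ)`, up to an exponential factor that the functional equation of `θ` cancels exactly.
Inverting `τ ↦ -1/τ` therefore turns the eta series into a sum over `k` of `θ(k/12, τ/12)`, and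
expanding these back into series over `n` leaves the Gauss sum `Σ_k (12/k) e^{2πi nk/12}` as the
coefficient of `e^{2πi τ n²/24}`. This Gauss sum equals `√12 · (12/n)`, which makes `η` reappear.
-/

open scoped Real
open Complex

/-- The Kronecker symbol `(12/n)`: `1` if `n ≡ ±1 (mod 12)`, `-1` if `n ≡ ±5 (mod 12)`,
`0` otherwise; this is the unique primitive Dirichlet character modulo 12. -/
noncomputable def chiTwelve (n : ℤ) : ℂ :=
  if n % 12 = 1 ∨ n % 12 = 11 then 1
  else if n % 12 = 5 ∨ n % 12 = 7 then -1
  else 0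

/-- The Dedekind eta function, written as
`η(τ) = (1/2) Σ_{n∈ℤ} (12/n) e^{2πiτ n²/24}`. -/
noncomputable def dedekindEta (τ : ℂ) : ℂ :=
  (1 / 2) * ∑' n : ℤ, chiTwelve n * Complex.exp (2 * Real.pi * I * τ * (n : ℂ) ^ 2 / 24)

open Function

lemma Function.Periodic.finite_range_int {α : Type*} {f : ℤ → α} {N : ℤ} (hf : Periodic f N)
    (hN : 0 < N) : (Set.range f).Finite :=
  ((Set.finite_Ico 0 N).image f).subset <| by
    rintro _ ⟨n, rfl⟩
    obtain ⟨m, hm, e⟩ := hf.exists_mem_Ico₀ hN n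
    exact ⟨m, hm, e.symm⟩

lemma Complex.ofReal_mul_cpow {r : ℝ} (hr : 0 < r) (z s : ℂ) :
    ((r : ℂ) * z) ^ s = (r : ℂ) ^ s * z ^ s := by
  rcases eq_or_ne z 0 with rfl | hz
  · rcases eq_or_ne s 0 with rfl | hs <;> simp [zero_cpow, *]
  have hr' : (r : ℂ) ≠ 0 := ofReal_ne_zero.2 hr.ne'
  rw [cpow_def_of_ne_zero (mul_ne_zero hr' hz), cpow_def_of_ne_zero hr', cpow_def_of_ne_zero hz,
    log_ofReal_mul hr hz, ← exp_add, add_mul, ofReal_log hr.le]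

lemma Complex.exp_two_pi_I_mul_int_div_emod (N : ℕ) [NeZero N] (m : ℤ) :
    cexp (2 * π * I * m / N) = cexp (2 * π * I * (m % N : ℤ) / N) := by
  rw [← ZMod.stdAddChar_coe, ← ZMod.stdAddChar_coe, ZMod.intCast_mod]

noncomputable def periodicTheta (N : ℕ) (c : ℤ → ℂ) (τ : ℂ) : ℂ :=
  ∑' n : ℤ, c n * cexp (π * I * n ^ 2 * τ / N)

noncomputable def finiteFourier (N : ℕ) (c : ℤ → ℂ) (n : ℤ) : ℂ :=
  ∑ k : Fin N, c k * cexp (2 * π * I * n * k / N)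

lemma periodicTheta_const_mul (N : ℕ) (a : ℂ) (c : ℤ → ℂ) (τ : ℂ) :
    periodicTheta N (fun n ↦ a * c n) τ = a * periodicTheta N c τ := by
  simp only [periodicTheta, mul_assoc, tsum_mul_left]

lemma cexp_sq_div_eq_mul_jacobiTheta₂_term (q : ℤ) (k N τ : ℂ) (hN : N ≠ 0) :
    cexp (π * I * (q * N + k) ^ 2 * τ / N) =
      cexp (π * I * k ^ 2 * τ / N) * jacobiTheta₂_term q (k * τ) (N * τ) := by
  rw [jacobiTheta₂_term, ← exp_add]
  congr 1
  field_simp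
  ring

/-- The functional equation of `θ`, rescaled so that the Gaussian factor it produces cancels. -/
lemma cpow_half_mul_cexp_mul_jacobiTheta₂ (x : ℂ) {N τ : ℂ} (hN : N ≠ 0) (hτ : τ ≠ 0) :
    (-I * N * τ) ^ (1 / 2 : ℂ) * (cexp (π * I * x ^ 2 * τ / N) * jacobiTheta₂ (x * τ) (N * τ)) =
      jacobiTheta₂ (x / N) (-1 / (N * τ)) := by
  have hroot : (-I * N * τ) ^ (1 / 2 : ℂ) ≠ 0 := by
    simp [cpow_eq_zero_iff, hN, hτ]
  have hexp : cexp (π * I * x ^ 2 * τ / N) * cexp (-π * I * (x * τ) ^ 2 / (N * τ)) = 1 := by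
    rw [← exp_add, ← exp_zero]
    congr 1
    field_simp
    ring
  rw [jacobiTheta₂_functional_equation, mul_div_mul_right _ _ hτ, ← mul_assoc (-I)]
  set θ := jacobiTheta₂ (x / N) (-1 / (N * τ))
  set a := cexp (π * I * x ^ 2 * τ / N)
  set b := cexp (-π * I * (x * τ) ^ 2 / (N * τ))
  linear_combination θ * hexp + a * b * θ * mul_one_div_cancel hroot

section PeriodicTheta

variable {N : ℕ} [NeZero N] {c : ℤ → ℂ} {τ : ℂ}

lemma summable_mul_cexp_sq_div {C : ℝ} (hc : ∀ n, ‖c n‖ ≤ C) (hτ : 0 < τ.im) :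
    Summable fun n : ℤ ↦ c n * cexp (π * I * n ^ 2 * τ / N) := by
  have hτN : 0 < (τ / N).im := by
    rw [div_natCast_im]; exact div_pos hτ (Nat.cast_pos.2 (NeZero.pos N))
  refine .of_norm_bounded
    (((summable_jacobiTheta₂_term_iff 0 _).2 hτN).norm.mul_left C) fun n ↦ ?_
  rw [norm_mul, jacobiTheta₂_term, mul_zero, zero_add, mul_div_assoc]
  exact mul_le_mul_of_nonneg_right (hc n) (norm_nonneg _)

lemma periodicTheta_eq_sum_jacobiTheta₂ (hc : Periodic c N) (hτ : 0 < τ.im) :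
    periodicTheta N c τ =
      ∑ k : Fin N, c k * (cexp (π * I * k ^ 2 * τ / N) * jacobiTheta₂ (k * τ) (N * τ)) := by
  obtain ⟨C, hC⟩ := (hc.finite_range_int (by simp [NeZero.pos N])).isBounded.exists_norm_le
  have hsum := summable_mul_cexp_sq_div (N := N) (fun n ↦ hC _ ⟨n, rfl⟩) hτ
  let e : Fin N × ℤ ≃ ℤ := (Equiv.prodComm _ _).trans (Int.divModEquiv N).symm
  have hsum' : Summable fun p ↦ c (e p) * cexp (π * I * (e p : ℂ) ^ 2 * τ / N) :=
    hsum.comp_injective e.injective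
  rw [periodicTheta, ← e.tsum_eq, hsum'.tsum_prod, tsum_fintype]
  refine Finset.sum_congr rfl fun k _ ↦ ?_
  have hterm (q : ℤ) : c (e (k, q)) * cexp (π * I * (e (k, q) : ℂ) ^ 2 * τ / N) =
      c k * (cexp (π * I * k ^ 2 * τ / N) * jacobiTheta₂_term q (k * τ) (N * τ)) := by
    simp only [e, Equiv.trans_apply, Equiv.prodComm_apply, Prod.swap_prod_mk,
      Int.divModEquiv_symm_apply]
    rw [(by simpa [add_comm] using hc.int_mul q k : c (q * N + k) = c k),
      ← cexp_sq_div_eq_mul_jacobiTheta₂_term q _ _ _ (Nat.cast_ne_zero.2 (NeZero.ne N))]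
    push_cast
    rfl
  simp only [hterm, tsum_mul_left, jacobiTheta₂]

lemma sum_mul_jacobiTheta₂_div_eq_periodicTheta (c : ℤ → ℂ) (hτ : 0 < τ.im) :
    ∑ k : Fin N, c k * jacobiTheta₂ (k / N) (τ / N) = periodicTheta N (finiteFourier N c) τ := by
  have hτN : 0 < (τ / N).im := by
    rw [div_natCast_im]; exact div_pos hτ (Nat.cast_pos.2 (NeZero.pos N))
  simp only [jacobiTheta₂, ← tsum_mul_left]
  rw [← Summable.tsum_finsetSum fun (k : Fin N) _ ↦
    ((summable_jacobiTheta₂_term_iff (k / N : ℂ) _).2 hτN).mul_left (c k)]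
  refine tsum_congr fun n ↦ ?_
  simp only [finiteFourier, Finset.sum_mul, mul_assoc, jacobiTheta₂_term, ← exp_add]
  refine Finset.sum_congr rfl fun k _ ↦ ?_
  ring_nf

theorem periodicTheta_functional_equation (hc : Periodic c N) (hτ : 0 < τ.im) :
    (N * (I / τ)) ^ (1 / 2 : ℂ) * periodicTheta N c (-1 / τ) =
      periodicTheta N (finiteFourier N c) τ := by
  have hτ0 : τ ≠ 0 := by rintro rfl; simp at hτ
  have hN : (N : ℂ) ≠ 0 := Nat.cast_ne_zero.2 (NeZero.ne N)
  have hw : 0 < (-1 / τ).im := by simpa using UpperHalfPlane.im_pnat_div_pos 1 ⟨τ, hτ⟩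
  have hroot : (N * (I / τ) : ℂ) = -I * N * (-1 / τ) := by ring
  have hinv : -1 / (N * (-1 / τ)) = τ / N := by field_simp
  rw [periodicTheta_eq_sum_jacobiTheta₂ hc hw, Finset.mul_sum,
    ← sum_mul_jacobiTheta₂_div_eq_periodicTheta c hτ]
  refine Finset.sum_congr rfl fun k _ ↦ ?_
  rw [mul_left_comm, hroot, cpow_half_mul_cexp_mul_jacobiTheta₂ _ hN (by simpa using hτ0), hinv]

end PeriodicTheta

lemma chiTwelve_periodic : Periodic chiTwelve 12 :=
  fun n ↦ by simp [chiTwelve]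

lemma finiteFourier_chiTwelve (n : ℤ) : finiteFourier 12 chiTwelve n = √12 * chiTwelve n := by
  let e (m : ℤ) : ℂ := cexp (2 * π * I * m / 12)
  have he (m : ℤ) : e m = e (m % 12) := by simpa using exp_two_pi_I_mul_int_div_emod 12 m
  have hexpand : finiteFourier 12 chiTwelve n = e n - e (5 * n) - e (7 * n) + e (11 * n) := by
    simp [finiteFourier, Fin.sum_univ_succ, chiTwelve, e]
    ring_nf
  have hcos (m : ℤ) : e m + e (-m) = 2 * Real.cos (π * m / 6) := by
    simp only [e]
    push_cast
    rw [two_cos]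
    ring_nf
  have hcos5 : Real.cos (π * 5 / 6) = -(√3 / 2) := by
    rw [show π * 5 / 6 = π - π / 6 by ring, Real.cos_pi_sub, Real.cos_pi_div_six]
  have hsqrt : √12 = 2 * √3 := by
    rw [show (12 : ℝ) = 2 ^ 2 * 3 by norm_num, Real.sqrt_mul (by norm_num),
      Real.sqrt_sq zero_le_two]
  have gauss_one : e 1 - e 5 - e 7 + e 11 = √12 := by
    calc e 1 - e 5 - e 7 + e 11 = (e 1 + e (-1)) - (e 5 + e (-5)) := by
          rw [he (-1), he (-5)]; norm_num; ring
      _ = √12 := by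
          rw [hcos, hcos]
          simp only [Int.cast_one, mul_one, Int.cast_ofNat, hcos5, Real.cos_pi_div_six, hsqrt]
          push_cast
          ring
  have hχ : chiTwelve n = chiTwelve (n % 12) := by simp [chiTwelve]
  rw [hexpand, hχ, he n, he (5 * n), he (7 * n), he (11 * n), Int.mul_emod 5, Int.mul_emod 7,
    Int.mul_emod 11]
  have h0 : 0 ≤ n % 12 := by omega
  have h12 : n % 12 < 12 := by omega
  generalize n % 12 = r at h0 h12 ⊢
  -- for `r` prime to 12, `k ↦ r k` permutes `{1, 5, 7, 11}` with sign `(12/r)`; otherwise the four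
  -- terms cancel in pairs
  interval_cases r <;> norm_num [chiTwelve] <;>
    first | linear_combination gauss_one | linear_combination -gauss_one

lemma dedekindEta_eq_periodicTheta (τ : ℂ) : dedekindEta τ = periodicTheta 12 chiTwelve τ / 2 := by
  rw [dedekindEta, periodicTheta, one_div_mul_eq_div]
  congr 2
  funext n
  push_cast
  ring_nf

/-- the transformation formula `√(i/τ) η(−1/τ) = η(τ)` for `Im τ > 0`,
where the principal branch of the square root is used. -/
theorem dedekindEta_inversion (τ : ℂ) (hτ : 0 < τ.im) :
    (I / τ) ^ (1 / 2 : ℂ) * dedekindEta (-1 / τ) = dedekindEta τ := by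
  have hFE := periodicTheta_functional_equation (N := 12) chiTwelve_periodic hτ
  have hsqrt : ((12 : ℕ) * (I / τ) : ℂ) ^ (1 / 2 : ℂ) = √12 * (I / τ) ^ (1 / 2 : ℂ) := by
    rw [show ((12 : ℕ) : ℂ) = ((12 : ℝ) : ℂ) by norm_num, ofReal_mul_cpow (by norm_num),
      Real.sqrt_eq_rpow, ofReal_cpow (by norm_num)]
    norm_num
  rw [hsqrt, funext finiteFourier_chiTwelve, periodicTheta_const_mul, mul_assoc] at hFE
  rw [dedekindEta_eq_periodicTheta, dedekindEta_eq_periodicTheta, ← mul_div_assoc,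
    mul_left_cancel₀ (by simp) hFE]
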